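/- arXiv:2007.03210 — 3 statements merged into one kernel-verified Lean document; each statement's English description precedes it below -/
import Mathlib

section
/- Let L̄ : 2^[d] → ℝ≥0 be C-approximately supermodular (for all S ⊆ T and i, C·(L̄(S) − L̄(S ∪ {i})) ≥ L̄(T) − L̄(T ∪ {i})), monotone decreasing, with L̄([d]) = 0. For S ⊆ [d] let R(S) = {i : L̄(S ∪ {i}) < L̄(S)} and R^η(S) = {i : L̄(S) − L̄(S ∪ {i}) > η}. If R^η(S) = ∅ then L̄(S) ≤ C·η·|R(S)|. -/
/-!
Coordinates outside `R(S)` do not decrease `L̄` at `S`, so by approximate supermodularity they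
do not decrease it at any superset either; hence `L̄` is monotone increasing above `S ∪ R(S)` and
`L̄(S ∪ R(S)) ≤ L̄([d]) = 0`. On the other hand, adding the coordinates of `R(S)` one at a time
to `S` lowers `L̄` by at most `C·η` per step, again by approximate supermodularity.
-/

open Finset

variable {α : Type*} [DecidableEq α] (L : Finset α → ℝ)

/-- The set `R(S)`. -/
noncomputable def decreasingCoords [Fintype α] (S : Finset α) : Finset α :=
  {i | L (insert i S) < L S}

lemma le_union_of_forall_le_insert {T : Finset α}
    (h : ∀ U, T ⊆ U → ∀ i, L U ≤ L (insert i U)) (A : Finset α) : L T ≤ L (T ∪ A) := by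
  induction A using Finset.induction_on with
  | empty => simp
  | insert i A _ ih =>
    rw [union_insert]
    exact ih.trans (h _ subset_union_left i)

lemma sub_union_le_mul_card {S : Finset α} {c : ℝ}
    (h : ∀ U, S ⊆ U → ∀ i, L U - L (insert i U) ≤ c) (A : Finset α) :
    L S - L (S ∪ A) ≤ c * #A := by
  induction A using Finset.induction_on with
  | empty => simp
  | insert i A hiA ih =>
    rw [union_insert, card_insert_of_notMem hiA]
    have := h (S ∪ A) subset_union_left i
    push_cast
    linarith

lemma le_insert_of_decreasingCoords_subset [Fintype α] {C : ℝ} (hC : 0 ≤ C)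
    (hsup : ∀ S T : Finset α, S ⊆ T → ∀ i : α,
      L T - L (insert i T) ≤ C * (L S - L (insert i S)))
    {S U : Finset α} (hU : S ∪ decreasingCoords L S ⊆ U) (i : α) :
    L U ≤ L (insert i U) := by
  by_cases hi : i ∈ decreasingCoords L S
  · rw [insert_eq_of_mem (hU (mem_union_right _ hi))]
  · have hS : L S ≤ L (insert i S) := by simpa [decreasingCoords] using hi
    have := hsup S U (subset_union_left.trans hU) i
    linarith [mul_nonpos_of_nonneg_of_nonpos hC (sub_nonpos.2 hS)]

theorem small_loss_when_no_large_marginal_general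
    (d : ℕ) (L : Finset (Fin d) → ℝ) (C η : ℝ) (hC : 1 ≤ C)
    (hsup : ∀ S T : Finset (Fin d), S ⊆ T → ∀ i : Fin d,
      L T - L (insert i T) ≤ C * (L S - L (insert i S)))
    (hfull : L Finset.univ = 0)
    (S : Finset (Fin d))
    (hRη : ∀ i : Fin d, L S - L (insert i S) ≤ η) :
    L S ≤ C * η * ({i : Fin d | L (insert i S) < L S}.ncard : ℝ) := by
  have hC0 : 0 ≤ C := zero_le_one.trans hC
  set R := decreasingCoords L S
  have hR : {i : Fin d | L (insert i S) < L S}.ncard = #R := by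
    rw [← Set.ncard_coe_finset]; simp [R, decreasingCoords]
  have hzero : L (S ∪ R) ≤ 0 := by
    have := le_union_of_forall_le_insert L (T := S ∪ R)
      (fun U hU i ↦ le_insert_of_decreasingCoords_subset L hC0 hsup hU i) univ
    rwa [union_eq_right.2 (subset_univ _), hfull] at this
  have hdrop : L S - L (S ∪ R) ≤ C * η * #R :=
    sub_union_le_mul_card L (fun U hU i ↦
      (hsup S U hU i).trans (mul_le_mul_of_nonneg_left (hRη i) hC0)) R
  rw [hR]
  linarith

/-- If `L̄` is `C`-approximately supermodular, monotone decreasing,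
nonnegative, with `L̄([d]) = 0`, and no coordinate has marginal decrease larger than
`η` at `S` (i.e. `R^η(S) = ∅`), then `L̄(S) ≤ C·η·|R(S)|`, where
`R(S) = {i : L̄(S ∪ {i}) < L̄(S)}`. -/
theorem small_loss_when_no_large_marginal
    (d : ℕ) (L : Finset (Fin d) → ℝ) (C η : ℝ) (hC : 1 ≤ C) (hη : 0 < η)
    (hnonneg : ∀ S, 0 ≤ L S)
    (hanti : ∀ S T : Finset (Fin d), S ⊆ T → L T ≤ L S)
    (hsup : ∀ S T : Finset (Fin d), S ⊆ T → ∀ i : Fin d,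
      L T - L (insert i T) ≤ C * (L S - L (insert i S)))
    (hfull : L Finset.univ = 0)
    (S : Finset (Fin d))
    (hRη : ∀ i : Fin d, L S - L (insert i S) ≤ η) :
    L S ≤ C * η * ({i : Fin d | L (insert i S) < L S}.ncard : ℝ) :=
  small_loss_when_no_large_marginal_general d L C η hC hsup hfull S hRη
end

section
/- Let m(x) = a·(x₁ ⊕ x₂) for a ≠ 0, where ⊕ is XOR, with x uniform on {0,1}^d. Define V̄(S) = E[(E[m(w) | w_S = x_S])²]. Then for every S ⊆ [d] with {1,2} ⊄ S and |S ∩ {1,2}| ≤ 1, and every j ∈ [d], V̄(S ∪ {j}) = V̄(S) whenever j ∉ {1,2} or S ∩ {1,2} = ∅. In particular, for all S ⊆ [d]∖{1,2} and all j ∈ [d], V̄(S ∪ {j}) − V̄(S) = 0, so no single-coordinate split changes the variance function. -/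
open Finset

/-- Conditional mean `E[m(w) | w_S = x_S]` for weight function `p` on `{0,1}^d`
(with the convention `·/0 = 0`). -/
noncomputable def condMean {d : ℕ} (p m : (Fin d → Bool) → ℝ) (S : Finset (Fin d))
    (x : Fin d → Bool) : ℝ :=
  (∑ w : Fin d → Bool, if ∀ j ∈ S, w j = x j then p w * m w else 0) /
  (∑ w : Fin d → Bool, if ∀ j ∈ S, w j = x j then p w else 0)

/-- `V̄(S) = E_x[(E_w[m(w) | w_S = x_S])²]`. -/
noncomputable def Vbar {d : ℕ} (p m : (Fin d → Bool) → ℝ) (S : Finset (Fin d)) : ℝ :=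
  ∑ x : Fin d → Bool, p x * (condMean p m S x) ^ 2

/-- The uniform distribution on `{0,1}^d`. -/
noncomputable def unif (d : ℕ) : (Fin d → Bool) → ℝ := fun _ => 1 / 2 ^ d

/-!
Flipping a coordinate `k ∉ S` is a measure-preserving involution of `{0,1}^d` that preserves
every fiber `{w | w_S = x_S}`. If `k` is one of the two XOR coordinates, it also turns `m` into
`a - m`, so the conditional mean of `m` on each such fiber is `a / 2`. Hence `V̄(S) = a² / 4` for
every `S` missing one of the two coordinates, and under either hypothesis on `j` the set
`insert j S` still misses one of them.
-/

section Flip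

variable {ι : Type*} [DecidableEq ι]

def flipAt (k : ι) (w : ι → Bool) : ι → Bool := Function.update w k (!w k)

@[simp]
lemma flipAt_apply_self (k : ι) (w : ι → Bool) : flipAt k w k = !w k := by
  simp [flipAt]

lemma flipAt_apply_of_ne {k j : ι} (h : j ≠ k) (w : ι → Bool) : flipAt k w j = w j := by
  simp [flipAt, h]

lemma flipAt_involutive (k : ι) : Function.Involutive (flipAt k) := fun w => by
  simp [flipAt]

lemma xor_flipAt {i₁ i₂ k : ι} (hi : i₁ ≠ i₂) (hk : k = i₁ ∨ k = i₂) (w : ι → Bool) :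
    xor (flipAt k w i₁) (flipAt k w i₂) = !xor (w i₁) (w i₂) := by
  rcases hk with rfl | rfl
  · simp [flipAt_apply_of_ne hi.symm]
  · simp [flipAt_apply_of_ne hi]

end Flip

lemma condMean_eq_half_of_flip {d : ℕ} {p f : (Fin d → Bool) → ℝ} {S : Finset (Fin d)}
    {k : Fin d} (hk : k ∉ S) (hp_pos : ∀ w, 0 < p w) (hp : ∀ w, p (flipAt k w) = p w)
    {c : ℝ} (hf : ∀ w, f (flipAt k w) + f w = c) (x : Fin d → Bool) :
    condMean p f S x = c / 2 := by
  set P : (Fin d → Bool) → Prop := fun w => ∀ j ∈ S, w j = x j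
  have hP : ∀ w, P (flipAt k w) ↔ P w := fun w =>
    forall₂_congr fun j hj => by rw [flipAt_apply_of_ne (ne_of_mem_of_not_mem hj hk)]
  have hswap : ∑ w, (if P w then p w * f w else 0)
      = ∑ w, (if P w then p w * f (flipAt k w) else 0) := by
    rw [← Equiv.sum_comp (flipAt_involutive k).toPerm]
    simp [hP, hp]
  have hD : 0 < ∑ w, (if P w then p w else 0) :=
    sum_pos' (fun w _ => by split_ifs <;> simp [(hp_pos w).le])
      ⟨x, mem_univ x, by simp [P, hp_pos x]⟩
  have hsum : 2 * ∑ w, (if P w then p w * f w else 0) = c * ∑ w, (if P w then p w else 0) := by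
    rw [two_mul]
    nth_rw 2 [hswap]
    rw [← sum_add_distrib, mul_sum]
    refine sum_congr rfl fun w _ => ?_
    split_ifs
    · rw [← hf w]; ring
    · simp
  unfold condMean
  rw [div_eq_div_iff hD.ne' two_ne_zero]
  linarith

section Xor

variable {d : ℕ} {a : ℝ} {i₁ i₂ : Fin d} {m : (Fin d → Bool) → ℝ}

lemma condMean_unif_xor (hi : i₁ ≠ i₂)
    (hm : ∀ x, m x = a * (if xor (x i₁) (x i₂) then 1 else 0))
    {S : Finset (Fin d)} (hS : ¬{i₁, i₂} ⊆ S) (x : Fin d → Bool) :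
    condMean (unif d) m S x = a / 2 := by
  obtain ⟨k, hk_pair, hk⟩ := not_subset.mp hS
  refine condMean_eq_half_of_flip hk (fun _ => by simp [unif]) (fun _ => rfl) (fun w => ?_) x
  have hk' : k = i₁ ∨ k = i₂ := by simpa using hk_pair
  rw [hm, hm, xor_flipAt hi hk']
  cases xor (w i₁) (w i₂) <;> simp

lemma Vbar_unif_xor (hi : i₁ ≠ i₂)
    (hm : ∀ x, m x = a * (if xor (x i₁) (x i₂) then 1 else 0))
    {S : Finset (Fin d)} (hS : ¬{i₁, i₂} ⊆ S) :
    Vbar (unif d) m S = a ^ 2 / 4 := by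
  simp only [Vbar, condMean_unif_xor hi hm hS, unif, sum_const, card_univ, Fintype.card_fun,
    Fintype.card_bool, Fintype.card_fin, nsmul_eq_mul]
  push_cast
  field_simp
  ring

end Xor

lemma not_pair_subset_insert {α : Type*} [DecidableEq α] {i₁ i₂ j : α} {S : Finset α}
    (hi : i₁ ≠ i₂) (hS : ¬{i₁, i₂} ⊆ S) (hj : j ∉ ({i₁, i₂} : Finset α) ∨ S ∩ {i₁, i₂} = ∅) :
    ¬{i₁, i₂} ⊆ insert j S := by
  intro h
  rcases hj with hj_out | hS_disj
  · exact hS ((subset_insert_iff_of_notMem hj_out).mp h)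
  · have on_j : ∀ i ∈ ({i₁, i₂} : Finset α), i = j := fun i hi =>
      (mem_insert.mp (h hi)).resolve_right
        (disjoint_right.mp (disjoint_iff_inter_eq_empty.mpr hS_disj) hi)
    exact hi ((on_j i₁ (by simp)).trans (on_j i₂ (by simp)).symm)

theorem xor_no_marginal_gain_general
    (d : ℕ) (a : ℝ) (i₁ i₂ : Fin d) (hi : i₁ ≠ i₂)
    (m : (Fin d → Bool) → ℝ)
    (hm : ∀ x, m x = a * (if xor (x i₁) (x i₂) then 1 else 0)) :
    (∀ S : Finset (Fin d), ¬({i₁, i₂} ⊆ S) → (S ∩ {i₁, i₂}).card ≤ 1 →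
      ∀ j : Fin d, (j ∉ ({i₁, i₂} : Finset (Fin d)) ∨ S ∩ {i₁, i₂} = ∅) →
        Vbar (unif d) m (insert j S) = Vbar (unif d) m S) ∧
    (∀ S : Finset (Fin d), S ∩ {i₁, i₂} = ∅ → ∀ j : Fin d,
        Vbar (unif d) m (insert j S) - Vbar (unif d) m S = 0) := by
  have split_gain_zero : ∀ S : Finset (Fin d), ¬({i₁, i₂} ⊆ S) → ∀ j : Fin d,
      (j ∉ ({i₁, i₂} : Finset (Fin d)) ∨ S ∩ {i₁, i₂} = ∅) →
      Vbar (unif d) m (insert j S) = Vbar (unif d) m S := fun S hS j hj => by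
    rw [Vbar_unif_xor hi hm hS, Vbar_unif_xor hi hm (not_pair_subset_insert hi hS hj)]
  refine ⟨fun S hS _ => split_gain_zero S hS, fun S hS j => ?_⟩
  have hS' : ¬{i₁, i₂} ⊆ S := fun h => by simp [inter_eq_right.mpr h] at hS
  rw [split_gain_zero S hS' j (Or.inr hS), sub_self]

/-- For `m(x) = a·(x_{i₁} ⊕ x_{i₂})` under the uniform distribution:
for every `S` not containing both relevant coordinates and with at most one of them,
and every `j` with `j ∉ {i₁,i₂}` or `S ∩ {i₁,i₂} = ∅`, `V̄(S ∪ {j}) = V̄(S)`; in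
particular, for `S ⊆ [d]∖{i₁,i₂}` every single-coordinate split has zero gain. -/
theorem xor_no_marginal_gain
    (d : ℕ) (a : ℝ) (ha : a ≠ 0) (i₁ i₂ : Fin d) (hi : i₁ ≠ i₂)
    (m : (Fin d → Bool) → ℝ)
    (hm : ∀ x, m x = a * (if xor (x i₁) (x i₂) then 1 else 0)) :
    (∀ S : Finset (Fin d), ¬({i₁, i₂} ⊆ S) → (S ∩ {i₁, i₂}).card ≤ 1 →
      ∀ j : Fin d, (j ∉ ({i₁, i₂} : Finset (Fin d)) ∨ S ∩ {i₁, i₂} = ∅) →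
        Vbar (unif d) m (insert j S) = Vbar (unif d) m S) ∧
    (∀ S : Finset (Fin d), S ∩ {i₁, i₂} = ∅ → ∀ j : Fin d,
        Vbar (unif d) m (insert j S) - Vbar (unif d) m S = 0) :=
  xor_no_marginal_gain_general d a i₁ i₂ hi m hm
end

section
/- Let m(x) = a·x₁ + a·x₂ − b·x₁x₂ with x uniform on {0,1}^d and define V̄(S) = E[(E[m(w) | w_S = x_S])²]. Then V̄(∅) = (a − b/4)², V̄({1}) = V̄({2}) = (5/4)a² − (3/4)ab + (1/8)b², and V̄({1,2}) = (3/2)a² − ab + (1/4)b². Consequently, whenever b ≠ 2a, the ratio (V̄({1,2}) − V̄({2})) / (V̄({1}) − V̄(∅)) equals 2·(2a² − 2ab + b²)/(b − 2a)², which is finite. -/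
open Finset

/-- The indicator `{0,1}`-value of a boolean coordinate. -/
def b2r (b : Bool) : ℝ := if b then 1 else 0

/-!
Under the uniform distribution, a function of the two coordinates `w i₁`, `w i₂` has conditional
means that again depend only on those coordinates, and summing out the other `d - 2` coordinates
contributes the same factor `2 ^ (d - 2)` to every numerator and denominator. So each `V̄(S)` is
the corresponding average over `{0,1}²`, which is evaluated directly.
-/

section PiSums

variable {ι β M : Type*} [Fintype ι] [DecidableEq ι] [Fintype β] [AddCommMonoid M]

theorem Fintype.sum_pi_comp_eval (i : ι) (f : β → M) :
    ∑ w : ι → β, f (w i) = (Fintype.card β ^ (Fintype.card ι - 1)) • ∑ b, f b := by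
  rw [← Fintype.sum_equiv (Equiv.piSplitAt i fun _ => β).symm (fun p => f p.1) _
      (fun p => by simp), Fintype.sum_prod_type]
  simp [Finset.sum_const, Fintype.card_subtype_compl, ← Finset.smul_sum]

theorem Fintype.sum_pi_comp_eval_eval {i j : ι} (hij : i ≠ j) (f : β → β → M) :
    ∑ w : ι → β, f (w i) (w j)
      = (Fintype.card β ^ (Fintype.card ι - 2)) • ∑ b₁, ∑ b₂, f b₁ b₂ := by
  rw [← Fintype.sum_equiv (Equiv.piSplitAt i fun _ => β).symm
      (fun p => f p.1 (p.2 ⟨j, hij.symm⟩)) _ (fun p => by simp [hij.symm]),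
    Fintype.sum_prod_type]
  simp only [Fintype.sum_pi_comp_eval (⟨j, hij.symm⟩ : {k // k ≠ i}),
    Fintype.card_subtype_compl, Fintype.card_unique, Nat.sub_sub, ← Finset.smul_sum]

end PiSums

/-- The conditional mean of `f` under the uniform distribution on `{0,1}²`, given the
coordinates `k` for which `sₖ` holds. -/
noncomputable def pairCondMean (f : Bool → Bool → ℝ) (s₁ s₂ : Prop) [Decidable s₁] [Decidable s₂]
    (c₁ c₂ : Bool) : ℝ :=
  (∑ b₁, ∑ b₂, if (s₁ → b₁ = c₁) ∧ (s₂ → b₂ = c₂) then f b₁ b₂ else 0) /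
    ∑ b₁, ∑ b₂, if (s₁ → b₁ = c₁) ∧ (s₂ → b₂ = c₂) then 1 else 0

theorem forall_mem_eq_iff_of_subset_pair {α β : Type*} [DecidableEq α] {S : Finset α} {i₁ i₂ : α}
    (hS : S ⊆ {i₁, i₂}) (w x : α → β) :
    (∀ j ∈ S, w j = x j) ↔ (i₁ ∈ S → w i₁ = x i₁) ∧ (i₂ ∈ S → w i₂ = x i₂) := by
  refine ⟨fun h => ⟨h i₁, h i₂⟩, ?_⟩
  rintro ⟨h₁, h₂⟩ j hj
  rcases Finset.mem_insert.1 (hS hj) with rfl | hj'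
  · exact h₁ hj
  · rw [Finset.mem_singleton.1 hj'] at hj ⊢
    exact h₂ hj

section Uniform

variable {d : ℕ} (m : (Fin d → Bool) → ℝ) (S : Finset (Fin d))

theorem condMean_unif (x : Fin d → Bool) :
    condMean (unif d) m S x =
      (∑ w : Fin d → Bool, if ∀ j ∈ S, w j = x j then m w else 0) /
        ∑ w : Fin d → Bool, if ∀ j ∈ S, w j = x j then (1 : ℝ) else 0 := by
  simp only [condMean, unif, ← mul_ite_zero, ← mul_boole _ (1 / 2 ^ d : ℝ), ← Finset.mul_sum]
  exact mul_div_mul_left _ _ (by positivity)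

theorem Vbar_unif : Vbar (unif d) m S = (∑ x, condMean (unif d) m S x ^ 2) / 2 ^ d := by
  simp only [Vbar, unif, Finset.sum_div, one_div_mul_eq_div]

variable {i₁ i₂ : Fin d}

theorem Vbar_unif_of_subset_pair (hi : i₁ ≠ i₂) (f : Bool → Bool → ℝ)
    (hm : ∀ w, m w = f (w i₁) (w i₂)) (hS : S ⊆ {i₁, i₂}) :
    Vbar (unif d) m S = (∑ c₁, ∑ c₂, pairCondMean f (i₁ ∈ S) (i₂ ∈ S) c₁ c₂ ^ 2) / 4 := by
  have hd : 1 < d := by simpa using Fintype.one_lt_card_iff_nontrivial.2 ⟨⟨i₁, i₂, hi⟩⟩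
  have hpow : (2 : ℝ) ^ d = 2 ^ (d - 2) * 4 := by rw [← pow_sub_mul_pow 2 hd]; norm_num
  have hcondMean (x : Fin d → Bool) :
      condMean (unif d) m S x = pairCondMean f (i₁ ∈ S) (i₂ ∈ S) (x i₁) (x i₂) := by
    rw [condMean_unif, pairCondMean]
    simp only [forall_mem_eq_iff_of_subset_pair hS, hm]
    rw [Fintype.sum_pi_comp_eval_eval hi
        (fun b₁ b₂ => if (i₁ ∈ S → b₁ = x i₁) ∧ (i₂ ∈ S → b₂ = x i₂) then f b₁ b₂ else 0),
      Fintype.sum_pi_comp_eval_eval hi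
        (fun b₁ b₂ => if (i₁ ∈ S → b₁ = x i₁) ∧ (i₂ ∈ S → b₂ = x i₂) then (1 : ℝ) else 0)]
    simp only [nsmul_eq_mul]
    apply mul_div_mul_left
    positivity
  rw [Vbar_unif]
  simp only [hcondMean]
  rw [Fintype.sum_pi_comp_eval_eval hi
    (fun c₁ c₂ => pairCondMean f (i₁ ∈ S) (i₂ ∈ S) c₁ c₂ ^ 2), hpow]
  simp only [nsmul_eq_mul, Fintype.card_bool, Fintype.card_fin, Nat.cast_pow, Nat.cast_ofNat]
  apply mul_div_mul_left
  positivity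

end Uniform

/-- For `m(x) = a·x₁ + a·x₂ − b·x₁x₂` under the uniform distribution on
`{0,1}^d`: `V̄(∅) = (a − b/4)²`, `V̄({1}) = V̄({2}) = (5/4)a² − (3/4)ab + (1/8)b²`,
`V̄({1,2}) = (3/2)a² − ab + (1/4)b²`; and if `b ≠ 2a` then
`(V̄({1,2}) − V̄({2}))/(V̄({1}) − V̄(∅)) = 2(2a² − 2ab + b²)/(b − 2a)²`. -/
theorem quadratic_variance_values
    (d : ℕ) (a b : ℝ) (i₁ i₂ : Fin d) (hi : i₁ ≠ i₂)
    (m : (Fin d → Bool) → ℝ)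
    (hm : ∀ x, m x = a * b2r (x i₁) + a * b2r (x i₂) - b * (b2r (x i₁) * b2r (x i₂))) :
    Vbar (unif d) m ∅ = (a - b / 4) ^ 2 ∧
    Vbar (unif d) m {i₁} = 5 / 4 * a ^ 2 - 3 / 4 * a * b + 1 / 8 * b ^ 2 ∧
    Vbar (unif d) m {i₂} = 5 / 4 * a ^ 2 - 3 / 4 * a * b + 1 / 8 * b ^ 2 ∧
    Vbar (unif d) m {i₁, i₂} = 3 / 2 * a ^ 2 - a * b + 1 / 4 * b ^ 2 ∧
    (b ≠ 2 * a →
      (Vbar (unif d) m {i₁, i₂} - Vbar (unif d) m {i₂}) /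
          (Vbar (unif d) m {i₁} - Vbar (unif d) m ∅)
        = 2 * (2 * a ^ 2 - 2 * a * b + b ^ 2) / (b - 2 * a) ^ 2) := by
  have hV S (hS : S ⊆ {i₁, i₂}) := Vbar_unif_of_subset_pair m S hi
    (fun b₁ b₂ => a * b2r b₁ + a * b2r b₂ - b * (b2r b₁ * b2r b₂)) hm hS
  have hV₀ : Vbar (unif d) m ∅ = (a - b / 4) ^ 2 := by
    rw [hV ∅ (empty_subset _)]
    simp only [pairCondMean, Fintype.sum_bool]
    norm_num [b2r]
    ring
  have hV₁ : Vbar (unif d) m {i₁} = 5 / 4 * a ^ 2 - 3 / 4 * a * b + 1 / 8 * b ^ 2 := by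
    rw [hV {i₁} (by simp)]
    simp only [pairCondMean, Fintype.sum_bool]
    norm_num [b2r, hi.symm]
    ring
  have hV₂ : Vbar (unif d) m {i₂} = 5 / 4 * a ^ 2 - 3 / 4 * a * b + 1 / 8 * b ^ 2 := by
    rw [hV {i₂} (by simp)]
    simp only [pairCondMean, Fintype.sum_bool]
    norm_num [b2r, hi]
    ring
  have hV₁₂ : Vbar (unif d) m {i₁, i₂} = 3 / 2 * a ^ 2 - a * b + 1 / 4 * b ^ 2 := by
    rw [hV {i₁, i₂} subset_rfl]
    simp only [pairCondMean, Fintype.sum_bool]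
    norm_num [b2r]
    ring
  refine ⟨hV₀, hV₁, hV₂, hV₁₂, fun hb => ?_⟩
  have hgap : Vbar (unif d) m {i₁} - Vbar (unif d) m ∅ = (b - 2 * a) ^ 2 / 16 := by
    rw [hV₁, hV₀]; ring
  have hb' : (b - 2 * a) ^ 2 ≠ 0 := pow_ne_zero 2 (sub_ne_zero.2 hb)
  rw [hgap, hV₁₂, hV₂]
  field_simp
  ring
end
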